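/- Noise subspace bound: In the same setting as the signal subspace bound (K = UΣV^T true SVD with σ_k > 0, and K = Û [[Σ̂_t, Ŵ_12],[Ŵ_21, Σ̂_0 + W_22]] V̂^T an approximate block factorization), if σ_k² > ‖Σ̂_0 + W_22‖₂², then ‖V_k^T V̂_0‖₂ ≤ (σ_k ‖Ŵ_12‖₂ + ‖Ŵ_21‖₂ ‖Σ̂_0 + W_22‖₂) / (σ_k² − ‖Σ̂_0 + W_22‖₂²). -/

import Mathlib

/-!
Put `P = Uᵀ Û` and `Q = Vᵀ V̂`. Comparing the two factorizations of `K` gives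
`Σ Q = P M` and, after transposing, `Σ P = Q Mᵀ`, where `M` is the block matrix. Their top-right
blocks are the coupled Sylvester equations
`Σ_k Q₁₂ = P₁₁ Ŵ₁₂ + P₁₂ (Σ̂₀ + W₂₂)` and `Σ_k P₁₂ = Q₁₁ Ŵ₂₁ᵀ + Q₁₂ (Σ̂₀ + W₂₂)ᵀ`,
with `Q₁₂ = V_kᵀ V̂₀`. As `P₁₁ = U_kᵀ Û_k` and `Q₁₁ = V_kᵀ V̂_k` have norm at most `1`, and
every diagonal entry of `Σ_k` is at least `σ_k`,
`σ_k ‖Q₁₂‖ ≤ ‖Ŵ₁₂‖ + ‖P₁₂‖ ‖Σ̂₀ + W₂₂‖` and `σ_k ‖P₁₂‖ ≤ ‖Ŵ₂₁‖ + ‖Q₁₂‖ ‖Σ̂₀ + W₂₂‖`;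
eliminating `‖P₁₂‖` gives the bound.
-/

open Matrix
open scoped Matrix.Norms.L2Operator

namespace Matrix

section L2OpNorm

variable {𝕜 m n : Type*} [RCLike 𝕜] [Fintype m] [Fintype n] [DecidableEq n]

lemma l2_opNorm_one_le : ‖(1 : Matrix n n 𝕜)‖ ≤ 1 := by
  rw [← diagonal_one, l2_opNorm_diagonal]
  exact pi_norm_le_iff_of_nonneg zero_le_one |>.mpr fun _ => norm_one.le

lemma l2_opNorm_le_one_of_conjTranspose_mul_self_eq_one {A : Matrix m n 𝕜}
    (h : Aᴴ * A = 1) : ‖A‖ ≤ 1 := by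
  have hsq : ‖A‖ * ‖A‖ ≤ 1 := by
    rw [← l2_opNorm_conjTranspose_mul_self, h]
    exact l2_opNorm_one_le
  nlinarith [norm_nonneg A]

lemma mul_l2_opNorm_le_l2_opNorm_diagonal_mul [DecidableEq m] {d : m → 𝕜} {s : ℝ} (hs : 0 < s)
    (hd : ∀ i, s ≤ ‖d i‖) (A : Matrix m n 𝕜) : s * ‖A‖ ≤ ‖diagonal d * A‖ := by
  have hd0 : ∀ i, d i ≠ 0 := fun i => norm_pos_iff.mp (hs.trans_le (hd i))
  have hinv : ‖diagonal d⁻¹‖ ≤ s⁻¹ := by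
    rw [l2_opNorm_diagonal]
    refine pi_norm_le_iff_of_nonneg (inv_nonneg.mpr hs.le) |>.mpr fun i => ?_
    rw [Pi.inv_apply, norm_inv]
    exact inv_anti₀ hs (hd i)
  have hA : A = diagonal d⁻¹ * (diagonal d * A) := by
    rw [← Matrix.mul_assoc, diagonal_mul_diagonal]
    simp [inv_mul_cancel₀ (hd0 _)]
  calc s * ‖A‖ ≤ s * (‖diagonal d⁻¹‖ * ‖diagonal d * A‖) := by
        conv_lhs => rw [hA]
        gcongr
        exact l2_opNorm_mul _ _
    _ ≤ s * (s⁻¹ * ‖diagonal d * A‖) := by gcongr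
    _ = ‖diagonal d * A‖ := by field_simp

end L2OpNorm

section Real

variable {r m n : Type*} [Fintype r] [Fintype m] [Fintype n] [DecidableEq m] [DecidableEq n]

lemma l2_opNorm_transpose (A : Matrix m n ℝ) : ‖Aᵀ‖ = ‖A‖ := by
  rw [← conjTranspose_eq_transpose_of_trivial, l2_opNorm_conjTranspose]

lemma l2_opNorm_transpose_mul_le_one [DecidableEq r] {A : Matrix r m ℝ} {B : Matrix r n ℝ}
    (hA : Aᵀ * A = 1) (hB : Bᵀ * B = 1) : ‖Aᵀ * B‖ ≤ 1 := by
  rw [← conjTranspose_eq_transpose_of_trivial] at hA hB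
  calc ‖Aᵀ * B‖ ≤ ‖Aᵀ‖ * ‖B‖ := l2_opNorm_mul _ _
    _ ≤ 1 * 1 := by
      rw [l2_opNorm_transpose]
      gcongr <;> exact l2_opNorm_le_one_of_conjTranspose_mul_self_eq_one ‹_›
    _ = 1 := one_mul 1

end Real

lemma mul_transpose_mul_eq_transpose_mul_mul {R r m : Type*} [CommSemiring R] [Fintype r]
    [Fintype m] [DecidableEq m] {U V Uh Vh : Matrix r m R} {D M : Matrix m m R}
    (hU : Uᵀ * U = 1) (hVh : Vhᵀ * Vh = 1) (h : U * D * Vᵀ = Uh * M * Vhᵀ) :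
    D * (Vᵀ * Vh) = (Uᵀ * Uh) * M := by
  calc D * (Vᵀ * Vh) = (Uᵀ * U) * D * Vᵀ * Vh := by rw [hU, Matrix.one_mul, Matrix.mul_assoc]
    _ = Uᵀ * (U * D * Vᵀ) * Vh := by simp only [Matrix.mul_assoc]
    _ = Uᵀ * Uh * M * (Vhᵀ * Vh) := by rw [h]; simp only [Matrix.mul_assoc]
    _ = (Uᵀ * Uh) * M := by rw [hVh, Matrix.mul_one]

section Blocks

variable {R r m n : Type*} [CommSemiring R] [Fintype r]

lemma transpose_mul_eq_fromBlocks (A B : Matrix r (m ⊕ n) R) :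
    Aᵀ * B = fromBlocks (A.toCols₁ᵀ * B.toCols₁) (A.toCols₁ᵀ * B.toCols₂)
      (A.toCols₂ᵀ * B.toCols₁) (A.toCols₂ᵀ * B.toCols₂) := by
  rw [← fromCols_toCols A, ← fromCols_toCols B, transpose_fromCols, fromRows_mul_fromCols]
  simp

variable [DecidableEq m] [DecidableEq n]

lemma toCols₁_transpose_mul_self {A : Matrix r (m ⊕ n) R} (h : Aᵀ * A = 1) :
    A.toCols₁ᵀ * A.toCols₁ = 1 := by
  rw [transpose_mul_eq_fromBlocks, ← fromBlocks_one] at h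
  exact (fromBlocks_inj.mp h).1

lemma diagonal_mul_toCols₁_transpose_mul_toCols₂ [Fintype m] [Fintype n]
    {U V Uh Vh : Matrix r (m ⊕ n) R} (hU : Uᵀ * U = 1) (hVh : Vhᵀ * Vh = 1) {d : m ⊕ n → R}
    {St : Matrix m m R} {W12 : Matrix m n R} {W21 : Matrix n m R} {S : Matrix n n R}
    (h : U * diagonal d * Vᵀ = Uh * fromBlocks St W12 W21 S * Vhᵀ) :
    diagonal (fun i => d (.inl i)) * (V.toCols₁ᵀ * Vh.toCols₂) =
      U.toCols₁ᵀ * Uh.toCols₁ * W12 + U.toCols₁ᵀ * Uh.toCols₂ * S := by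
  have h12 := congrArg toBlocks₁₂ (mul_transpose_mul_eq_transpose_mul_mul hU hVh h)
  rwa [transpose_mul_eq_fromBlocks, transpose_mul_eq_fromBlocks, ← Sum.elim_comp_inl_inr d,
    ← fromBlocks_diagonal, fromBlocks_multiply, fromBlocks_multiply, toBlocks_fromBlocks₁₂,
    toBlocks_fromBlocks₁₂, Matrix.zero_mul, add_zero] at h12

end Blocks

lemma l2_opNorm_le_of_coupled_sylvester {m n : Type*} [Fintype m] [Fintype n] [DecidableEq m]
    [DecidableEq n] {d : m → ℝ} {s : ℝ} (hs : 0 < s) (hd : ∀ i, s ≤ d i)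
    {X Y E F : Matrix m n ℝ} {A C : Matrix m m ℝ} {S : Matrix n n ℝ}
    (hA : ‖A‖ ≤ 1) (hC : ‖C‖ ≤ 1)
    (hX : diagonal d * X = A * E + Y * S) (hY : diagonal d * Y = C * F + X * Sᵀ)
    (hgap : ‖S‖ ^ 2 < s ^ 2) :
    ‖X‖ ≤ (s * ‖E‖ + ‖F‖ * ‖S‖) / (s ^ 2 - ‖S‖ ^ 2) := by
  have hd' : ∀ i, s ≤ ‖d i‖ := fun i => (hd i).trans (Real.le_norm_self _)
  have key : ∀ {P Q G : Matrix m n ℝ} {B : Matrix m m ℝ} {T : Matrix n n ℝ}, ‖B‖ ≤ 1 →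
      diagonal d * P = B * G + Q * T → s * ‖P‖ ≤ ‖G‖ + ‖Q‖ * ‖T‖ := by
    intro P Q G B T hB hP
    calc s * ‖P‖ ≤ ‖B * G + Q * T‖ := hP ▸ mul_l2_opNorm_le_l2_opNorm_diagonal_mul hs hd' P
      _ ≤ ‖B‖ * ‖G‖ + ‖Q‖ * ‖T‖ := (norm_add_le _ _).trans <|
          add_le_add (l2_opNorm_mul _ _) (l2_opNorm_mul _ _)
      _ ≤ ‖G‖ + ‖Q‖ * ‖T‖ := by grw [hB, one_mul]
  have hXb := key hA hX
  have hYb := key hC hY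
  rw [l2_opNorm_transpose] at hYb
  rw [le_div_iff₀ (sub_pos.mpr hgap)]
  nlinarith [norm_nonneg S, norm_nonneg X, norm_nonneg Y]

lemma l2_opNorm_toCols₁_transpose_mul_toCols₂_le {r m n : Type*} [Fintype r] [DecidableEq r]
    [Fintype m] [Fintype n] [DecidableEq m] [DecidableEq n] {U V Uh Vh : Matrix r (m ⊕ n) ℝ}
    (hU : Uᵀ * U = 1) (hV : Vᵀ * V = 1) (hUh : Uhᵀ * Uh = 1) (hVh : Vhᵀ * Vh = 1)
    {d : m ⊕ n → ℝ} {s : ℝ} (hs : 0 < s) (hd : ∀ i, s ≤ d (.inl i))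
    {St : Matrix m m ℝ} {W12 : Matrix m n ℝ} {W21 : Matrix n m ℝ} {S : Matrix n n ℝ}
    (h : U * diagonal d * Vᵀ = Uh * fromBlocks St W12 W21 S * Vhᵀ)
    (hgap : ‖S‖ ^ 2 < s ^ 2) :
    ‖V.toCols₁ᵀ * Vh.toCols₂‖ ≤ (s * ‖W12‖ + ‖W21‖ * ‖S‖) / (s ^ 2 - ‖S‖ ^ 2) := by
  have hT : V * diagonal d * Uᵀ = Vh * fromBlocks Stᵀ W21ᵀ W12ᵀ Sᵀ * Uhᵀ := by
    simpa [transpose_mul, Matrix.mul_assoc, fromBlocks_transpose] using congrArg transpose h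
  have hnorm : ∀ {A B : Matrix r (m ⊕ n) ℝ}, Aᵀ * A = 1 → Bᵀ * B = 1 →
      ‖A.toCols₁ᵀ * B.toCols₁‖ ≤ 1 := fun hA hB =>
    l2_opNorm_transpose_mul_le_one (toCols₁_transpose_mul_self hA) (toCols₁_transpose_mul_self hB)
  rw [← l2_opNorm_transpose W21]
  exact l2_opNorm_le_of_coupled_sylvester hs hd (hnorm hU hUh) (hnorm hV hVh)
    (diagonal_mul_toCols₁_transpose_mul_toCols₂ hU hVh h)
    (diagonal_mul_toCols₁_transpose_mul_toCols₂ hV hUh hT) hgap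

section Reindex

variable {R r m n : Type*} [CommSemiring R]

lemma submatrix_id_transpose_mul_self [Fintype r] [DecidableEq m] [DecidableEq n]
    {A : Matrix r n R} (h : Aᵀ * A = 1) (e : m ≃ n) :
    (A.submatrix id e)ᵀ * A.submatrix id e = 1 := by
  rw [transpose_submatrix]
  exact (submatrix_mul_equiv Aᵀ A e (.refl r) e).trans (by rw [h, submatrix_one_equiv])

lemma submatrix_mul_mul_transpose_submatrix [Fintype m] [Fintype n] (A B : Matrix r n R)
    (X : Matrix n n R) (e : m ≃ n) :
    A.submatrix id e * X.submatrix e e * (B.submatrix id e)ᵀ = A * X * Bᵀ := by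
  rw [transpose_submatrix, submatrix_mul_equiv A X id e e, submatrix_mul_equiv _ _ id e id,
    submatrix_id_id]

end Reindex

end Matrix

/-- Signal subspace bound (Theorem 3.1 of the paper, noise case): with true SVD
`K = U Σ Vᵀ` (nonincreasing nonnegative singular values `σ`, `σ_k > 0`) and approximate
factorization `K = Û [[Σ̂_t, Ŵ₁₂],[Ŵ₂₁, Σ̂₀+W₂₂]] V̂ᵀ`, if `σ_k² > ‖Σ̂₀+W₂₂‖₂²` then
`‖V_kᵀ V̂₀‖₂ ≤ (σ_k ‖Ŵ₁₂‖₂ + ‖Ŵ₂₁‖₂ ‖Σ̂₀+W₂₂‖₂)/(σ_k² − ‖Σ̂₀+W₂₂‖₂²)`. -/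
theorem stmt7 (k l : ℕ) (hk : 0 < k)
    (K U V Uh Vh : Matrix (Fin (k + l)) (Fin (k + l)) ℝ)
    (σ : Fin (k + l) → ℝ)
    (St : Matrix (Fin k) (Fin k) ℝ) (W12 : Matrix (Fin k) (Fin l) ℝ)
    (W21 : Matrix (Fin l) (Fin k) ℝ) (S0 W22 : Matrix (Fin l) (Fin l) ℝ)
    (hU : Uᵀ * U = 1) (hV : Vᵀ * V = 1)
    (hUh : Uhᵀ * Uh = 1) (hVh : Vhᵀ * Vh = 1)
    (hσdec : Antitone σ)
    (hσk : 0 < σ ⟨k - 1, by omega⟩)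
    (hK : K = U * Matrix.diagonal σ * Vᵀ)
    (hKh : K = Uh * (Matrix.fromBlocks St W12 W21 (S0 + W22)).submatrix
        finSumFinEquiv.symm finSumFinEquiv.symm * Vhᵀ)
    (hgap : ‖S0 + W22‖ ^ 2 < (σ ⟨k - 1, by omega⟩) ^ 2) :
    ‖(V.submatrix id (Fin.castAdd l))ᵀ * Vh.submatrix id (Fin.natAdd k)‖ ≤
      (σ ⟨k - 1, by omega⟩ * ‖W12‖ + ‖W21‖ * ‖S0 + W22‖) /
        ((σ ⟨k - 1, by omega⟩) ^ 2 - ‖S0 + W22‖ ^ 2) := by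
  set e : Fin k ⊕ Fin l ≃ Fin (k + l) := finSumFinEquiv
  have hfac : U.submatrix id e * diagonal (σ ∘ e) * (V.submatrix id e)ᵀ =
      Uh.submatrix id e * fromBlocks St W12 W21 (S0 + W22) * (Vh.submatrix id e)ᵀ := by
    rw [← submatrix_diagonal_equiv, submatrix_mul_mul_transpose_submatrix, ← hK, hKh,
      ← submatrix_mul_mul_transpose_submatrix _ _ _ e, submatrix_submatrix]
    simp
  have hσ (i : Fin k) : σ ⟨k - 1, by omega⟩ ≤ σ (e (.inl i)) :=
    hσdec (by simp only [e, finSumFinEquiv_apply_left, Fin.le_def, Fin.val_castAdd]; omega)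
  have hV₁ : V.submatrix id (Fin.castAdd l) = (V.submatrix id e).toCols₁ := by ext; simp [e]
  have hVh₂ : Vh.submatrix id (Fin.natAdd k) = (Vh.submatrix id e).toCols₂ := by ext; simp [e]
  rw [hV₁, hVh₂]
  exact l2_opNorm_toCols₁_transpose_mul_toCols₂_le (submatrix_id_transpose_mul_self hU e)
    (submatrix_id_transpose_mul_self hV e) (submatrix_id_transpose_mul_self hUh e)
    (submatrix_id_transpose_mul_self hVh e) hσk hσ hfac hgap
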